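/- Existence and uniqueness of the v-minimum match: Assume (z_x)_{x ∈ 𝒳} and (z_y)_{y ∈ 𝒴} are both linearly independent families, let (X*,Y*) be the maximum exact match in (𝒳,𝒴), and let v ∈ X* ∪ Y*. Then there exists a unique exact match (X_v,Y_v) with v ∈ X_v ∪ Y_v such that every exact match (X,Y) with v ∈ X ∪ Y satisfies X_v ⊆ X and Y_v ⊆ Y; namely, (X_v,Y_v) is the componentwise intersection of all exact matches containing v. -/
import Mathlib

variable {V : Type*} [DecidableEq V]

set_option linter.unusedSectionVars false in
lemma span_image_inter {d : ℕ} (z : V → EuclideanSpace ℝ (Fin d)) (s : Set V)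
    (hli : LinearIndependent ℝ (fun x : s => z x)) {A B : Set V} (hA : A ⊆ s) (hB : B ⊆ s) :
    Submodule.span ℝ (z '' (A ∩ B)) = Submodule.span ℝ (z '' A) ⊓ Submodule.span ℝ (z '' B) := by
  apply le_antisymm
  · exact le_inf (Submodule.span_mono (Set.image_mono Set.inter_subset_left))
      (Submodule.span_mono (Set.image_mono Set.inter_subset_right))
  · rintro w ⟨hwA, hwB⟩
    have hAsplit : z '' A = z '' (A ∩ B) ∪ z '' (A \ B) := by
      rw [← Set.image_union, Set.inter_union_diff]
    rw [hAsplit, Submodule.span_union] at hwA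
    obtain ⟨a, ha, b, hb, rfl⟩ := Submodule.mem_sup.mp hwA
    have hb' : b ∈ Submodule.span ℝ (z '' B) := by
      have : a ∈ Submodule.span ℝ (z '' B) :=
        Submodule.span_mono (Set.image_mono Set.inter_subset_right) ha
      have := Submodule.sub_mem _ hwB this
      simpa using this
    have hdisj : Disjoint (Submodule.span ℝ (z '' (A \ B))) (Submodule.span ℝ (z '' B)) := by
      have h1 : z '' (A \ B) = (fun x : s => z x) '' (Subtype.val ⁻¹' (A \ B)) := by
        rw [show (fun (x : s) => z ↑x) '' (Subtype.val ⁻¹' (A \ B))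
            = z '' (Subtype.val '' (Subtype.val ⁻¹' (A \ B))) from (Set.image_image _ _ _).symm,
          Subtype.image_preimage_coe, Set.inter_eq_right.mpr (fun x hx => hA hx.1)]
      have h2 : z '' B = (fun x : s => z x) '' (Subtype.val ⁻¹' B) := by
        rw [show (fun (x : s) => z ↑x) '' (Subtype.val ⁻¹' B)
            = z '' (Subtype.val '' (Subtype.val ⁻¹' B)) from (Set.image_image _ _ _).symm,
          Subtype.image_preimage_coe, Set.inter_eq_right.mpr hB]
      rw [h1, h2]
      exact hli.disjoint_span_image (Set.disjoint_sdiff_left.preimage _)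
    have hb0 : b = 0 := by
      have := hdisj.le_bot ⟨hb, hb'⟩
      simpa using this
    subst hb0
    simpa using ha

/-- `(X, Y)` is an exact match in `(𝒳, 𝒴)`. -/
def IsExactMatch (d : ℕ) (z : V → EuclideanSpace ℝ (Fin d))
    (𝒳 𝒴 X Y : Finset V) : Prop :=
  X ⊆ 𝒳 ∧ Y ⊆ 𝒴 ∧
    Submodule.span ℝ (z '' (X : Set V)) = Submodule.span ℝ (z '' (Y : Set V))

lemma isExactMatch_inter {d : ℕ} (z : V → EuclideanSpace ℝ (Fin d)) (𝒳 𝒴 : Finset V)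
    (hliX : LinearIndependent ℝ (fun x : 𝒳 => z x.1))
    (hliY : LinearIndependent ℝ (fun y : 𝒴 => z y.1))
    {X₁ Y₁ X₂ Y₂ : Finset V} (h₁ : IsExactMatch d z 𝒳 𝒴 X₁ Y₁)
    (h₂ : IsExactMatch d z 𝒳 𝒴 X₂ Y₂) :
    IsExactMatch d z 𝒳 𝒴 (X₁ ∩ X₂) (Y₁ ∩ Y₂) := by
  obtain ⟨hX₁, hY₁, hs₁⟩ := h₁
  obtain ⟨hX₂, hY₂, hs₂⟩ := h₂
  refine ⟨(Finset.inter_subset_left).trans hX₁, (Finset.inter_subset_left).trans hY₁, ?_⟩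
  rw [Finset.coe_inter, Finset.coe_inter,
    span_image_inter z (𝒳 : Set V) hliX (by exact_mod_cast hX₁) (by exact_mod_cast hX₂),
    span_image_inter z (𝒴 : Set V) hliY (by exact_mod_cast hY₁) (by exact_mod_cast hY₂),
    hs₁, hs₂]

/-- Existence and uniqueness of the `v`-minimum exact match, which is the componentwise
intersection of all exact matches containing `v`. -/
theorem vMinimum_existsUnique (d : ℕ) (z : V → EuclideanSpace ℝ (Fin d))
    (𝒳 𝒴 : Finset V) (hdisj : Disjoint 𝒳 𝒴)
    (hliX : LinearIndependent ℝ (fun x : 𝒳 => z x.1))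
    (hliY : LinearIndependent ℝ (fun y : 𝒴 => z y.1))
    (Xs Ys : Finset V)
    (hmax : IsExactMatch d z 𝒳 𝒴 Xs Ys ∧
      ∀ X Y : Finset V, IsExactMatch d z 𝒳 𝒴 X Y → X ⊆ Xs ∧ Y ⊆ Ys)
    (v : V) (hv : v ∈ Xs ∪ Ys) :
    (∃! p : Finset V × Finset V,
        IsExactMatch d z 𝒳 𝒴 p.1 p.2 ∧ v ∈ p.1 ∪ p.2 ∧
          ∀ X Y : Finset V, IsExactMatch d z 𝒳 𝒴 X Y → v ∈ X ∪ Y → p.1 ⊆ X ∧ p.2 ⊆ Y) ∧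
    (∀ Xv Yv : Finset V,
        (IsExactMatch d z 𝒳 𝒴 Xv Yv ∧ v ∈ Xv ∪ Yv ∧
          ∀ X Y : Finset V, IsExactMatch d z 𝒳 𝒴 X Y → v ∈ X ∪ Y → Xv ⊆ X ∧ Yv ⊆ Y) →
        (∀ u, u ∈ Xv ↔ ∀ X Y : Finset V, IsExactMatch d z 𝒳 𝒴 X Y → v ∈ X ∪ Y → u ∈ X) ∧
        (∀ u, u ∈ Yv ↔ ∀ X Y : Finset V, IsExactMatch d z 𝒳 𝒴 X Y → v ∈ X ∪ Y → u ∈ Y)) := by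
  classical
  constructor
  · -- existence and uniqueness
    -- the finite set of candidate matches containing v
    set Q : Finset (Finset V × Finset V) :=
      (Xs.powerset ×ˢ Ys.powerset).filter
        (fun p => IsExactMatch d z 𝒳 𝒴 p.1 p.2 ∧ v ∈ p.1 ∪ p.2) with hQ
    have hmemQ : ∀ p : Finset V × Finset V,
        p ∈ Q ↔ IsExactMatch d z 𝒳 𝒴 p.1 p.2 ∧ v ∈ p.1 ∪ p.2 := by
      intro p
      rw [hQ, Finset.mem_filter, Finset.mem_product, Finset.mem_powerset, Finset.mem_powerset]
      constructor
      · tauto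
      · rintro ⟨h1, h2⟩
        exact ⟨⟨(hmax.2 _ _ h1).1, (hmax.2 _ _ h1).2⟩, h1, h2⟩
    have hQne : Q.Nonempty := ⟨(Xs, Ys), (hmemQ _).mpr ⟨hmax.1, hv⟩⟩
    obtain ⟨p, hpQ, hpmin⟩ := Q.exists_min_image (fun p => p.1.card + p.2.card) hQne
    obtain ⟨hpM, hpv⟩ := (hmemQ p).mp hpQ
    have hmin : ∀ X Y : Finset V, IsExactMatch d z 𝒳 𝒴 X Y → v ∈ X ∪ Y → p.1 ⊆ X ∧ p.2 ⊆ Y := by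
      intro X Y hM hvXY
      have hinterM : IsExactMatch d z 𝒳 𝒴 (p.1 ∩ X) (p.2 ∩ Y) :=
        isExactMatch_inter z 𝒳 𝒴 hliX hliY hpM hM
      have hvinter : v ∈ (p.1 ∩ X) ∪ (p.2 ∩ Y) := by
        rcases Finset.mem_union.mp hpv with h1 | h1 <;>
          rcases Finset.mem_union.mp hvXY with h2 | h2
        · exact Finset.mem_union_left _ (Finset.mem_inter.mpr ⟨h1, h2⟩)
        · exact absurd (hdisj.forall_ne_finset (hpM.1 h1) (hM.2.1 h2)) (by simp)
        · exact absurd (hdisj.forall_ne_finset (hM.1 h2) (hpM.2.1 h1)) (by simp)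
        · exact Finset.mem_union_right _ (Finset.mem_inter.mpr ⟨h1, h2⟩)
      have hle := hpmin (p.1 ∩ X, p.2 ∩ Y) ((hmemQ (p.1 ∩ X, p.2 ∩ Y)).mpr ⟨hinterM, hvinter⟩)
      simp only at hle
      have h1 : (p.1 ∩ X).card ≤ p.1.card := Finset.card_le_card Finset.inter_subset_left
      have h2 : (p.2 ∩ Y).card ≤ p.2.card := Finset.card_le_card Finset.inter_subset_left
      have e1 : p.1 ∩ X = p.1 :=
        Finset.eq_of_subset_of_card_le Finset.inter_subset_left (by omega)
      have e2 : p.2 ∩ Y = p.2 :=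
        Finset.eq_of_subset_of_card_le Finset.inter_subset_left (by omega)
      exact ⟨by rw [← e1]; exact Finset.inter_subset_right,
        by rw [← e2]; exact Finset.inter_subset_right⟩
    refine ⟨p, ⟨hpM, hpv, hmin⟩, ?_⟩
    rintro q ⟨hqM, hqv, hqmin⟩
    obtain ⟨hq1, hq2⟩ := hqmin _ _ hpM hpv
    obtain ⟨hp1, hp2⟩ := hmin _ _ hqM hqv
    exact Prod.ext (Finset.Subset.antisymm hq1 hp1) (Finset.Subset.antisymm hq2 hp2)
  · rintro Xv Yv ⟨hM, hvM, hminM⟩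
    constructor
    · intro u
      exact ⟨fun hu X Y hXY hvXY => (hminM X Y hXY hvXY).1 hu,
        fun h => h Xv Yv hM hvM⟩
    · intro u
      exact ⟨fun hu X Y hXY hvXY => (hminM X Y hXY hvXY).2 hu,
        fun h => h Xv Yv hM hvM⟩
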